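/- On the square grid ℤ², a chain of coins (a sequence c₁, …, c_k with L¹-distance between consecutive coins at most 2) arranged along two sides of a rectangle as an 'L' — starting at one corner, ending at the opposite corner — has span equal to the full rectangle. Concretely: the set L = {(0, 2i) : 0 ≤ i ≤ m} ∪ {(2j, 2m) : 0 ≤ j ≤ m'} has span equal to the full rectangle {0,…,2m'} × {0,…,2m}. -/

import Mathlib

/-!
A point outside a rectangle has at most one grid neighbour inside it, so the rectangle is closed
under the span rule and contains the span. Conversely, each odd point on the two sides of the `L`
lies between two chain points, so both sides are in the span; the rectangle then fills column by
column, top-down, since `(x + 1, y)` is adjacent to `(x, y)` and `(x + 1, y + 1)`.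
-/

/-- The span of a set of positions: the least superset closed under adding any
vertex adjacent to at least 2 vertices of the set. -/
def Span {P : Type*} (G : SimpleGraph P) (C : Set P) : Set P :=
  ⋂₀ {S : Set P | C ⊆ S ∧ ∀ p, (∃ a ∈ S, ∃ b ∈ S, a ≠ b ∧ G.Adj p a ∧ G.Adj p b) → p ∈ S}


/-- The square grid on ℤ². -/
def Grid : SimpleGraph (ℤ × ℤ) where
  Adj p q := |p.1 - q.1| + |p.2 - q.2| = 1
  symm := ⟨fun p q (h : |p.1 - q.1| + |p.2 - q.2| = 1) => show |q.1 - p.1| + |q.2 - p.2| = 1 by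
    rw [abs_sub_comm q.1 p.1, abs_sub_comm q.2 p.2]; exact h⟩
  loopless := ⟨fun p => show ¬ (|p.1 - p.1| + |p.2 - p.2| = 1) by simp⟩

section Span

variable {P : Type*} {G : SimpleGraph P} {C : Set P}

lemma subset_span : C ⊆ Span G C :=
  fun _ hp _ hS => hS.1 hp

lemma mem_span_of_adj {p a b : P} (ha : a ∈ Span G C) (hb : b ∈ Span G C) (hab : a ≠ b)
    (hpa : G.Adj p a) (hpb : G.Adj p b) : p ∈ Span G C :=
  fun _ hS => hS.2 p ⟨a, ha _ hS, b, hb _ hS, hab, hpa, hpb⟩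

lemma span_subset {S : Set P} (hCS : C ⊆ S)
    (hS : ∀ p, (∃ a ∈ S, ∃ b ∈ S, a ≠ b ∧ G.Adj p a ∧ G.Adj p b) → p ∈ S) :
    Span G C ⊆ S :=
  Set.sInter_subset_of_mem ⟨hCS, hS⟩

end Span

namespace Grid

lemma mem_Icc_prod_Icc_of_adj {a b c d : ℤ} {p u v : ℤ × ℤ}
    (hu : u ∈ Set.Icc a b ×ˢ Set.Icc c d) (hv : v ∈ Set.Icc a b ×ˢ Set.Icc c d) (huv : u ≠ v)
    (hpu : Grid.Adj p u) (hpv : Grid.Adj p v) : p ∈ Set.Icc a b ×ˢ Set.Icc c d := by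
  obtain ⟨p₁, p₂⟩ := p
  obtain ⟨u₁, u₂⟩ := u
  obtain ⟨v₁, v₂⟩ := v
  simp only [Grid, abs_eq_max_neg, Set.mem_prod, Set.mem_Icc, ne_eq, Prod.mk.injEq] at *
  omega

variable {C : Set (ℤ × ℤ)}

lemma mem_span_of_fst_neighbors {x y : ℤ} (h₁ : (x, y) ∈ Span Grid C)
    (h₂ : (x + 2, y) ∈ Span Grid C) : (x + 1, y) ∈ Span Grid C :=
  mem_span_of_adj h₁ h₂ (by simp) (by simp [Grid]) (by simp [Grid])

lemma mem_span_of_snd_neighbors {x y : ℤ} (h₁ : (x, y) ∈ Span Grid C)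
    (h₂ : (x, y + 2) ∈ Span Grid C) : (x, y + 1) ∈ Span Grid C :=
  mem_span_of_adj h₁ h₂ (by simp) (by simp [Grid]) (by simp [Grid])

lemma mem_span_of_left_of_up {x y : ℤ} (h₁ : (x, y) ∈ Span Grid C)
    (h₂ : (x + 1, y + 1) ∈ Span Grid C) : (x + 1, y) ∈ Span Grid C :=
  mem_span_of_adj h₁ h₂ (by simp) (by simp [Grid]) (by simp [Grid])

lemma mem_span_of_even_snd {x m : ℤ}
    (h : ∀ i, 0 ≤ i → i ≤ m → (x, 2 * i) ∈ Span Grid C) {y : ℤ} (hy₀ : 0 ≤ y) (hy : y ≤ 2 * m) :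
    (x, y) ∈ Span Grid C := by
  obtain ⟨i, rfl | rfl⟩ := Int.even_or_odd' y
  · exact h i (by omega) (by omega)
  · have h₂ := h (i + 1) (by omega) (by omega)
    rw [mul_add, mul_one] at h₂
    exact mem_span_of_snd_neighbors (h i (by omega) (by omega)) h₂

lemma mem_span_of_even_fst {y m : ℤ}
    (h : ∀ j, 0 ≤ j → j ≤ m → (2 * j, y) ∈ Span Grid C) {x : ℤ} (hx₀ : 0 ≤ x) (hx : x ≤ 2 * m) :
    (x, y) ∈ Span Grid C := by
  obtain ⟨j, rfl | rfl⟩ := Int.even_or_odd' x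
  · exact h j (by omega) (by omega)
  · have h₂ := h (j + 1) (by omega) (by omega)
    rw [mul_add, mul_one] at h₂
    exact mem_span_of_fst_neighbors (h j (by omega) (by omega)) h₂

lemma column_succ_mem_span {x m : ℤ} (hcol : ∀ y, 0 ≤ y → y ≤ m → (x, y) ∈ Span Grid C)
    (htop : (x + 1, m) ∈ Span Grid C) {y : ℤ} (hy₀ : 0 ≤ y) (hy : y ≤ m) :
    (x + 1, y) ∈ Span Grid C := by
  induction y, hy using Int.leInductionDown with
  | base => exact htop
  | pred n hn ih =>
    have hup := ih (by omega)
    rw [← sub_add_cancel n 1] at hup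
    exact mem_span_of_left_of_up (hcol (n - 1) hy₀ (by omega)) hup

lemma Icc_prod_Icc_subset_span {m n : ℤ} (hcol : ∀ y, 0 ≤ y → y ≤ m → (0, y) ∈ Span Grid C)
    (hrow : ∀ x, 0 ≤ x → x ≤ n → (x, m) ∈ Span Grid C) :
    Set.Icc 0 n ×ˢ Set.Icc 0 m ⊆ Span Grid C := by
  suffices ∀ x, 0 ≤ x → x ≤ n → ∀ y, 0 ≤ y → y ≤ m → (x, y) ∈ Span Grid C by
    rintro ⟨x, y⟩ ⟨⟨hx₀, hx⟩, hy₀, hy⟩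
    exact this x hx₀ hx y hy₀ hy
  intro x hx₀
  induction x, hx₀ using Int.leInduction with
  | base => exact fun _ => hcol
  | succ x hx₀ ih =>
    exact fun hx _ => column_succ_mem_span (ih (by omega)) (hrow (x + 1) (by omega) hx)

end Grid

/-- An L-shaped chain along two sides of a rectangle has span equal to the full
rectangle. -/
theorem span_L_eq_rectangle (m m' : ℤ) (hm : 0 ≤ m) (hm' : 0 ≤ m') :
    Span Grid
        ({p | ∃ i : ℤ, 0 ≤ i ∧ i ≤ m ∧ p = ((0 : ℤ), 2 * i)} ∪
         {p | ∃ j : ℤ, 0 ≤ j ∧ j ≤ m' ∧ p = (2 * j, 2 * m)}) =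
      Set.Icc (0 : ℤ) (2 * m') ×ˢ Set.Icc (0 : ℤ) (2 * m) := by
  apply subset_antisymm
  · refine span_subset ?_ fun p ⟨u, hu, v, hv, huv, hpu, hpv⟩ =>
      Grid.mem_Icc_prod_Icc_of_adj hu hv huv hpu hpv
    rintro _ (⟨i, hi₀, hi, rfl⟩ | ⟨j, hj₀, hj, rfl⟩) <;>
      simp only [Set.mem_prod, Set.mem_Icc] <;> omega
  · apply Grid.Icc_prod_Icc_subset_span
    · exact fun _ => Grid.mem_span_of_even_snd fun i hi₀ hi =>
        subset_span (Or.inl ⟨i, hi₀, hi, rfl⟩)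
    · exact fun _ => Grid.mem_span_of_even_fst fun j hj₀ hj =>
        subset_span (Or.inr ⟨j, hj₀, hj, rfl⟩)
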